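/- Let Y be a mean zero random variable with variance σ² ∈ (0,∞), and let Y* be defined on the same probability space and have the Y-zero biased distribution. Suppose Y* − Y ≤ c almost surely for some constant c > 0. Fix t > e and set θ = (log t − log log t)/c; if E[exp(θY)] is finite, then P(Y ≥ t) ≤ exp(−(t/(2c))(log t − 2σ²/c)). -/

import Mathlib

open MeasureTheory ProbabilityTheory Real

/-- `Ystar` has the `Y`-zero biased distribution with respect to variance `σ2`:
`E[Y f(Y)] = σ2 * E[f'(Ystar)]` for every (absolutely continuous) differentiable
function `f` with derivative `f'` for which both expectations exist. -/
def ZeroBiased {Ω : Type*} [MeasurableSpace Ω] (μ : Measure Ω)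
    (Y Ystar : Ω → ℝ) (σ2 : ℝ) : Prop :=
  ∀ f f' : ℝ → ℝ, (∀ x, HasDerivAt f (f' x) x) →
    Integrable (fun ω => Y ω * f (Y ω)) μ →
    Integrable (fun ω => f' (Ystar ω)) μ →
    ∫ ω, Y ω * f (Y ω) ∂μ = σ2 * ∫ ω, f' (Ystar ω) ∂μ

/-! The tail bound is a Chernoff bound `P(Y ≥ t) ≤ exp (-θ t) m(θ)` for the moment generating
function `m` of `Y`. Applied to `f = exp (s ·)`, the zero bias identity and `Y* ≤ Y + c` give the
differential inequality `m'(s) = σ² s E[exp (s Y*)] ≤ σ² s exp (s c) m(s)`. Since `σ² s exp (s c)`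
is dominated by the derivative of `φ(s) = σ² s exp (s c) / c`, the function `m exp (-φ)` decreases,
so `m(θ) ≤ exp φ(θ)`. At `θ = (log t - log log t) / c` one has `exp (θ c) = t / log t` and
`θ ≥ log t / (2 c)`, and the bound follows. -/

lemma le_mul_exp_sub_of_hasDerivAt_le_mul {m φ m' φ' : ℝ → ℝ} {a b : ℝ} (hab : a ≤ b)
    (hm : ContinuousOn m (Set.Icc a b)) (hφ : ContinuousOn φ (Set.Icc a b))
    (hm' : ∀ s ∈ Set.Ioo a b, HasDerivAt m (m' s) s)
    (hφ' : ∀ s ∈ Set.Ioo a b, HasDerivAt φ (φ' s) s)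
    (hle : ∀ s ∈ Set.Ioo a b, m' s ≤ φ' s * m s) :
    m b ≤ m a * exp (φ b - φ a) := by
  have hanti : AntitoneOn (fun s => m s * exp (-φ s)) (Set.Icc a b) := by
    refine antitoneOn_of_hasDerivWithinAt_nonpos (convex_Icc a b)
      (f' := fun s => m' s * exp (-φ s) + m s * (exp (-φ s) * -φ' s))
      (hm.mul (continuous_exp.comp_continuousOn hφ.neg)) (fun s hs => ?_) (fun s hs => ?_)
    · rw [interior_Icc] at hs
      exact ((hm' s hs).mul (hφ' s hs).neg.exp).hasDerivWithinAt
    · rw [interior_Icc] at hs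
      have := mul_le_mul_of_nonneg_right (hle s hs) (exp_pos (-φ s)).le
      linarith
  have h := hanti (Set.left_mem_Icc.mpr hab) (Set.right_mem_Icc.mpr hab) hab
  calc m b = m b * exp (-φ b) * exp (φ b) := by rw [mul_assoc, ← exp_add]; simp
    _ ≤ m a * exp (-φ a) * exp (φ b) := by gcongr
    _ = m a * exp (φ b - φ a) := by rw [mul_assoc, ← exp_add, neg_add_eq_sub]

section MGF

variable {Ω : Type*} [MeasurableSpace Ω] {μ : Measure Ω} {X X' : Ω → ℝ} {a b c s : ℝ}

lemma exp_mul_le_exp_mul_add_exp_mul {x : ℝ} (has : a ≤ s) (hsb : s ≤ b) :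
    exp (s * x) ≤ exp (a * x) + exp (b * x) := by
  rcases le_total 0 x with hx | hx
  · have := exp_le_exp.mpr (mul_le_mul_of_nonneg_right hsb hx)
    linarith [exp_pos (a * x)]
  · have := exp_le_exp.mpr (mul_le_mul_of_nonpos_right has hx)
    linarith [exp_pos (b * x)]

lemma continuousOn_mgf_Icc (ha : Integrable (fun ω => exp (a * X ω)) μ)
    (hb : Integrable (fun ω => exp (b * X ω)) μ) :
    ContinuousOn (mgf X μ) (Set.Icc a b) := by
  refine continuousOn_of_dominated (bound := fun ω => exp (a * X ω) + exp (b * X ω))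
    (fun s hs => (integrable_exp_mul_of_le_of_le ha hb hs.1 hs.2).1)
    (fun s hs => ae_of_all _ fun ω => ?_) (ha.add hb)
    (ae_of_all _ fun ω => by fun_prop)
  rw [norm_of_nonneg (exp_pos _).le]
  exact exp_mul_le_exp_mul_add_exp_mul hs.1 hs.2

lemma Ioo_subset_interior_integrableExpSet [IsFiniteMeasure μ]
    (hb : Integrable (fun ω => exp (b * X ω)) μ) :
    Set.Ioo 0 b ⊆ interior (integrableExpSet X μ) := by
  rw [← interior_Icc]
  exact interior_mono fun s hs => integrable_exp_mul_of_nonneg_of_le hb hs.1 hs.2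

lemma integrable_exp_mul_of_ae_sub_le (hX' : AEMeasurable X' μ) (hbdd : ∀ᵐ ω ∂μ, X' ω - X ω ≤ c)
    (hs : 0 ≤ s) (hX : Integrable (fun ω => exp (s * X ω)) μ) :
    Integrable (fun ω => exp (s * X' ω)) μ := by
  refine (hX.const_mul (exp (s * c))).mono' (hX'.const_mul s).exp.aestronglyMeasurable ?_
  filter_upwards [hbdd] with ω hω
  rw [norm_of_nonneg (exp_pos _).le, ← exp_add, exp_le_exp]
  nlinarith

lemma mgf_le_exp_mul_mgf_of_ae_sub_le (hbdd : ∀ᵐ ω ∂μ, X' ω - X ω ≤ c) (hs : 0 ≤ s)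
    (hX : Integrable (fun ω => exp (s * X ω)) μ) :
    mgf X' μ s ≤ exp (s * c) * mgf X μ s := by
  rw [mgf, mgf, ← integral_const_mul]
  refine integral_mono_of_nonneg (ae_of_all _ fun ω => (exp_pos _).le)
    (hX.const_mul _) ?_
  filter_upwards [hbdd] with ω hω
  rw [← exp_add, exp_le_exp]
  nlinarith

end MGF

namespace ZeroBiased

variable {Ω : Type*} [MeasurableSpace Ω] {μ : Measure Ω} {Y Ystar : Ω → ℝ} {σ2 c : ℝ}

lemma integral_mul_exp_mul (hzb : ZeroBiased μ Y Ystar σ2) (s : ℝ)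
    (hY : Integrable (fun ω => Y ω * exp (s * Y ω)) μ)
    (hYstar : Integrable (fun ω => exp (s * Ystar ω)) μ) :
    ∫ ω, Y ω * exp (s * Y ω) ∂μ = σ2 * s * mgf Ystar μ s := by
  have hderiv (x : ℝ) : HasDerivAt (fun x => exp (s * x)) (s * exp (s * x)) x := by
    simpa [mul_comm] using ((hasDerivAt_id x).const_mul s).exp
  rw [hzb _ _ hderiv hY (hYstar.const_mul s), integral_const_mul, mgf, mul_assoc]

lemma integral_mul_exp_mul_le [IsFiniteMeasure μ] (hzb : ZeroBiased μ Y Ystar σ2)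
    (hYstar : AEMeasurable Ystar μ) (hσ2 : 0 ≤ σ2) (hbdd : ∀ᵐ ω ∂μ, Ystar ω - Y ω ≤ c)
    {s : ℝ} (hs : s ∈ interior (integrableExpSet Y μ)) (hs0 : 0 ≤ s) :
    ∫ ω, Y ω * exp (s * Y ω) ∂μ ≤ σ2 * s * exp (s * c) * mgf Y μ s := by
  have hint : Integrable (fun ω => exp (s * Y ω)) μ := (interior_subset hs : s ∈ _)
  have hmul : Integrable (fun ω => Y ω * exp (s * Y ω)) μ := by
    simpa using integrable_pow_mul_exp_of_mem_interior_integrableExpSet hs 1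
  rw [hzb.integral_mul_exp_mul s hmul (integrable_exp_mul_of_ae_sub_le hYstar hbdd hs0 hint),
    mul_assoc _ (exp _)]
  gcongr
  exact mgf_le_exp_mul_mgf_of_ae_sub_le hbdd hs0 hint

lemma mgf_le_exp [IsProbabilityMeasure μ] (hzb : ZeroBiased μ Y Ystar σ2)
    (hYstar : AEMeasurable Ystar μ) (hσ2 : 0 ≤ σ2) (hc : 0 < c)
    (hbdd : ∀ᵐ ω ∂μ, Ystar ω - Y ω ≤ c) {θ : ℝ} (hθ : 0 ≤ θ)
    (hmgf : Integrable (fun ω => exp (θ * Y ω)) μ) :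
    mgf Y μ θ ≤ exp (σ2 / c * (θ * exp (θ * c))) := by
  set φ : ℝ → ℝ := fun s => σ2 / c * (s * exp (s * c))
  have hφ' (s : ℝ) : HasDerivAt φ (σ2 / c * (exp (s * c) * (1 + s * c))) s :=
    (((hasDerivAt_id' s).mul (hasDerivAt_mul_const c).exp).const_mul (σ2 / c)).congr_deriv
      (by ring)
  have hsub := Ioo_subset_interior_integrableExpSet hmgf
  have hle (s : ℝ) (hs : s ∈ Set.Ioo 0 θ) :
      ∫ ω, Y ω * exp (s * Y ω) ∂μ ≤ σ2 / c * (exp (s * c) * (1 + s * c)) * mgf Y μ s := by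
    have hm := hzb.integral_mul_exp_mul_le hYstar hσ2 hbdd (hsub hs) hs.1.le
    have hrest : 0 ≤ σ2 / c * exp (s * c) * mgf Y μ s := by
      have := mgf_nonneg (X := Y) (μ := μ) (t := s)
      positivity
    have hsplit : σ2 / c * (exp (s * c) * (1 + s * c)) * mgf Y μ s
        = σ2 * s * exp (s * c) * mgf Y μ s + σ2 / c * exp (s * c) * mgf Y μ s := by
      field_simp
      ring
    linarith
  simpa [φ, mgf_zero] using le_mul_exp_sub_of_hasDerivAt_le_mul hθ
    (continuousOn_mgf_Icc (by simp) hmgf) (by fun_prop)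
    (fun s hs => hasDerivAt_mgf (hsub hs)) (fun s _ => hφ' s) hle

lemma measureReal_ge_le [IsProbabilityMeasure μ] (hzb : ZeroBiased μ Y Ystar σ2)
    (hYstar : AEMeasurable Ystar μ) (hσ2 : 0 ≤ σ2) (hc : 0 < c)
    (hbdd : ∀ᵐ ω ∂μ, Ystar ω - Y ω ≤ c) {θ : ℝ} (hθ : 0 ≤ θ)
    (hmgf : Integrable (fun ω => exp (θ * Y ω)) μ) (t : ℝ) :
    μ.real {ω | t ≤ Y ω} ≤ exp (-θ * t + σ2 / c * (θ * exp (θ * c))) := by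
  rw [exp_add]
  refine (measure_ge_le_exp_mul_mgf t hθ hmgf).trans ?_
  gcongr
  exact hzb.mgf_le_exp hYstar hσ2 hc hbdd hθ hmgf

end ZeroBiased

lemma two_mul_log_le_self {x : ℝ} (hx : 0 < x) : 2 * log x ≤ x := by
  have hquad := quadratic_le_exp_of_nonneg (x := x / 2) (by positivity)
  have hlog := log_le_log hx (show x ≤ exp (x / 2) by nlinarith)
  rw [log_exp] at hlog
  linarith

lemma neg_mul_add_le_of_exp_one_lt {t c σ2 θ : ℝ} (ht : exp 1 < t) (hc : 0 < c) (hσ2 : 0 ≤ σ2)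
    (hθ : θ = (log t - log (log t)) / c) :
    -θ * t + σ2 / c * (θ * exp (θ * c)) ≤ -(t / (2 * c)) * (log t - 2 * σ2 / c) := by
  have ht0 : 0 < t := (exp_pos 1).trans ht
  have hL : 1 < log t := (lt_log_iff_exp_lt ht0).mpr ht
  have hlogL : 0 ≤ log (log t) := log_nonneg hL.le
  have hlogL2 : 2 * log (log t) ≤ log t := two_mul_log_le_self (by linarith)
  have hexp : exp (θ * c) = t / log t := by
    rw [hθ, div_mul_cancel₀ _ hc.ne', exp_sub, exp_log ht0, exp_log (by linarith)]
  have hθ_le : θ * exp (θ * c) ≤ t / c := by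
    rw [hexp, hθ, div_mul_div_comm, div_le_div_iff₀ (by positivity) hc]
    nlinarith [mul_nonneg (mul_nonneg hlogL ht0.le) hc.le]
  have hθ_ge : log t / (2 * c) ≤ θ := by
    rw [hθ, div_le_div_iff₀ (by positivity) hc]
    nlinarith
  have hσ : σ2 / c * (θ * exp (θ * c)) ≤ σ2 / c * (t / c) := by gcongr
  have ht_mul : log t / (2 * c) * t ≤ θ * t := by gcongr
  have hrhs : -(t / (2 * c)) * (log t - 2 * σ2 / c) = -(log t / (2 * c) * t) + σ2 / c * (t / c) := by
    field_simp
    ring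
  linarith

theorem zero_bias_right_tail_tlogt_weak_general
    {Ω : Type*} [MeasurableSpace Ω] (μ : Measure Ω) [IsProbabilityMeasure μ]
    (Y Ystar : Ω → ℝ) (hYstar : Measurable Ystar)
    (σ2 : ℝ) (hσ2 : 0 < σ2)
    (hzb : ZeroBiased μ Y Ystar σ2)
    (c : ℝ) (hc : 0 < c)
    (hbdd : ∀ᵐ ω ∂μ, Ystar ω - Y ω ≤ c)
    (t : ℝ) (ht : Real.exp 1 < t)
    (hmgf : Integrable (fun ω => exp ((Real.log t - Real.log (Real.log t)) / c * Y ω)) μ) :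
    (μ {ω | t ≤ Y ω}).toReal ≤
      exp (-(t / (2 * c)) * (Real.log t - 2 * σ2 / c)) := by
  set θ := (log t - log (log t)) / c with hθ_def
  have h1t : 1 ≤ t := (one_le_exp zero_le_one).trans ht.le
  have hθ : 0 ≤ θ := div_nonneg (sub_nonneg.mpr (log_le_self (log_nonneg h1t))) hc.le
  exact (hzb.measureReal_ge_le hYstar.aemeasurable hσ2.le hc hbdd hθ hmgf t).trans
    (exp_le_exp.mpr (neg_mul_add_le_of_exp_one_lt ht hc hσ2.le hθ_def))

theorem zero_bias_right_tail_tlogt_weak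
    {Ω : Type*} [MeasurableSpace Ω] (μ : Measure Ω) [IsProbabilityMeasure μ]
    (Y Ystar : Ω → ℝ) (hY : Measurable Y) (hYstar : Measurable Ystar)
    (σ2 : ℝ) (hσ2 : 0 < σ2)
    (hmean : ∫ ω, Y ω ∂μ = 0) (hL2 : MemLp Y 2 μ) (hvar : variance Y μ = σ2)
    (hzb : ZeroBiased μ Y Ystar σ2)
    (c : ℝ) (hc : 0 < c)
    (hbdd : ∀ᵐ ω ∂μ, Ystar ω - Y ω ≤ c)
    (t : ℝ) (ht : Real.exp 1 < t)
    (hmgf : Integrable (fun ω => exp ((Real.log t - Real.log (Real.log t)) / c * Y ω)) μ) :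
    (μ {ω | t ≤ Y ω}).toReal ≤
      exp (-(t / (2 * c)) * (Real.log t - 2 * σ2 / c)) :=
  zero_bias_right_tail_tlogt_weak_general μ Y Ystar hYstar σ2 hσ2 hzb c hc hbdd t ht hmgf
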